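/- arXiv:1510.03598 — 3 statements merged into one kernel-verified Lean document; each statement's English description precedes it below -/
import Mathlib

section
/- Every finite simple graph is an induced subgraph of a self 2-distance graph: for every finite simple graph Γ there exists a finite simple graph H such that H₂ is isomorphic to H and Γ is isomorphic to an induced subgraph of H. -/
open SimpleGraph

/-- The 2-distance graph of a graph `G`: two distinct vertices are adjacent
iff their distance in `G` equals `2`. -/
def twoDistGraph {V : Type*} (G : SimpleGraph V) : SimpleGraph V where
  Adj u v := G.dist u v = 2
  symm := by
    constructor
    intro u v h
    show G.dist v u = 2
    rwa [SimpleGraph.dist_comm]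
  loopless := by
    constructor
    intro v h
    show False
    simp [SimpleGraph.dist_self] at h

/-- `G` has an `n`-cycle subgraph: `n` distinct vertices `v 0, …, v (n-1)` with
`v i` adjacent to `v (i+1 mod n)` for all `i`. -/
def HasNCycle {V : Type*} (G : SimpleGraph V) (n : ℕ) : Prop :=
  ∃ v : ZMod n → V, Function.Injective v ∧ ∀ i, G.Adj (v i) (v (i + 1))

/-- The edged product `C₅|C₃`: a pentagon and a triangle glued along an edge. -/
def C5C3 : SimpleGraph (Fin 6) :=
  SimpleGraph.fromEdgeSet {s(0,1), s(1,2), s(2,3), s(3,4), s(4,5), s(5,0), s(1,5)}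

/-!
Pad `G` with an isolated vertex to get a graph `K` on a nonempty vertex set, and let `B` be `K`
together with a path `0 - 1 - 2 - 3` whose two ends are joined to every vertex of `K` (so that
they have a common neighbour). Any two distinct non-adjacent vertices of `B` have a common
neighbour, so `B` has diameter at most 2 and `B₂ = Bᶜ`. The path on four vertices is
self-complementary, by an isomorphism exchanging its ends with its inner vertices, so `Bᶜ` is the
same construction applied to `Kᶜ`; hence also `(Bᶜ)₂ = B`. The disjoint union `H = B ⊔ Bᶜ`
therefore satisfies `H₂ = Bᶜ ⊔ B ≅ H`, and `G` is induced in `H`.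
-/

namespace SimpleGraph

variable {V W : Type*}

lemma twoDistGraph_adj {G : SimpleGraph V} {u v : V} :
    (twoDistGraph G).Adj u v ↔ G.edist u v = 2 :=
  ENat.toNat_eq_iff two_ne_zero

lemma Hom.edist_le {G : SimpleGraph V} {G' : SimpleGraph W} (f : G →g G') (u v : V) :
    G'.edist (f u) (f v) ≤ G.edist u v := by
  by_cases hr : G.Reachable u v
  · obtain ⟨p, hp⟩ := hr.exists_walk_length_eq_edist
    rw [← hp, ← Walk.length_map f]
    exact (p.map f).edist_le
  · simp [edist_eq_top_of_not_reachable hr]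

lemma Iso.edist_eq {G : SimpleGraph V} {G' : SimpleGraph W} (e : G ≃g G') (u v : V) :
    G'.edist (e u) (e v) = G.edist u v := by
  refine le_antisymm (Hom.edist_le e.toHom u v) ?_
  simpa using Hom.edist_le e.symm.toHom (e u) (e v)

lemma Iso.ediam_eq {G : SimpleGraph V} {G' : SimpleGraph W} (e : G ≃g G') :
    G'.ediam = G.ediam := by
  refine le_antisymm (ediam_le_iff.2 fun u v => ?_) (ediam_le_iff.2 fun u v => ?_)
  · exact e.symm.edist_eq u v ▸ edist_le_ediam
  · exact e.edist_eq u v ▸ edist_le_ediam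

def Iso.twoDistGraph {G : SimpleGraph V} {G' : SimpleGraph W} (e : G ≃g G') :
    twoDistGraph G ≃g twoDistGraph G' where
  toEquiv := e.toEquiv
  map_rel_iff' {u v} := by simp only [twoDistGraph_adj]; exact e.edist_eq u v ▸ Iff.rfl

lemma ediam_le_two_iff {G : SimpleGraph V} :
    G.ediam ≤ 2 ↔ ∀ u v, u ≠ v → ¬ G.Adj u v → ∃ w, G.Adj u w ∧ G.Adj v w := by
  refine ediam_le_iff.trans (forall₂_congr fun u v => ?_)
  rw [← not_lt, two_lt_edist_iff]
  simp only [not_and, ← ne_eq, ← Set.nonempty_iff_ne_empty, Set.Nonempty, mem_commonNeighbors]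

lemma twoDistGraph_eq_compl_of_ediam_le_two {G : SimpleGraph V} (h : G.ediam ≤ 2) :
    twoDistGraph G = Gᶜ := by
  ext u v
  rw [twoDistGraph_adj, edist_eq_two_iff, compl_adj]
  exact ⟨fun h => ⟨h.1, h.2.1⟩, fun ⟨hne, hadj⟩ => ⟨hne, hadj, ediam_le_two_iff.1 h u v hne hadj⟩⟩

lemma twoDistGraph_sum (G : SimpleGraph V) (H : SimpleGraph W) :
    twoDistGraph (G ⊕g H) = twoDistGraph G ⊕g twoDistGraph H := by
  ext (a | a) (b | b) <;>
    simp [twoDistGraph_adj, edist_eq_two_iff, Set.Nonempty, mem_commonNeighbors]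

lemma nonempty_twoDistGraph_sum_compl_iso {B : SimpleGraph V} (hB : B.ediam ≤ 2)
    (hBc : Bᶜ.ediam ≤ 2) : Nonempty (twoDistGraph (B ⊕g Bᶜ) ≃g B ⊕g Bᶜ) := by
  rw [twoDistGraph_sum, twoDistGraph_eq_compl_of_ediam_le_two hB,
    twoDistGraph_eq_compl_of_ediam_le_two hBc, compl_compl]
  exact ⟨Iso.sumComm⟩

def joinPathEnds (K : SimpleGraph W) : SimpleGraph (W ⊕ Fin 4) where
  Adj
    | .inl a, .inl b => K.Adj a b
    | .inr i, .inr j => (pathGraph 4).Adj i j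
    | .inl _, .inr i | .inr i, .inl _ => i = 0 ∨ i = 3
  symm := ⟨by
    rintro (a | i) (b | j) h
    exacts [Adj.symm h, h, h, Adj.symm h]⟩
  loopless := ⟨by
    rintro (a | i) h
    exacts [K.irrefl h, (pathGraph 4).irrefl h]⟩

section joinPathEnds

variable {K : SimpleGraph W} {a b : W} {i j : Fin 4}

@[simp] lemma joinPathEnds_adj_inl_inl : (joinPathEnds K).Adj (.inl a) (.inl b) ↔ K.Adj a b :=
  Iff.rfl

@[simp] lemma joinPathEnds_adj_inr_inr :
    (joinPathEnds K).Adj (.inr i) (.inr j) ↔ (pathGraph 4).Adj i j :=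
  Iff.rfl

@[simp] lemma joinPathEnds_adj_inl_inr : (joinPathEnds K).Adj (.inl a) (.inr i) ↔ i = 0 ∨ i = 3 :=
  Iff.rfl

@[simp] lemma joinPathEnds_adj_inr_inl : (joinPathEnds K).Adj (.inr i) (.inl a) ↔ i = 0 ∨ i = 3 :=
  Iff.rfl

end joinPathEnds

def Embedding.joinPathEndsInl (K : SimpleGraph W) : K ↪g joinPathEnds K :=
  ⟨Function.Embedding.inl, Iff.rfl⟩

lemma ediam_joinPathEnds_le_two [Nonempty W] (K : SimpleGraph W) :
    (joinPathEnds K).ediam ≤ 2 := by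
  have ends_or_common_nbr : ∀ i j : Fin 4, i ≠ j → ¬ (pathGraph 4).Adj i j →
      (i = 0 ∨ i = 3) ∧ (j = 0 ∨ j = 3) ∨ ∃ k, (pathGraph 4).Adj i k ∧ (pathGraph 4).Adj j k := by
    simp only [pathGraph_adj]; decide
  have inner_to_end : ∀ i : Fin 4, ¬ (i = 0 ∨ i = 3) →
      ∃ k, (k = 0 ∨ k = 3) ∧ (pathGraph 4).Adj i k := by
    simp only [pathGraph_adj]; decide
  rw [ediam_le_two_iff]
  rintro (a | i) (b | j) hne hadj
  · exact ⟨.inr 0, by simp, by simp⟩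
  · obtain ⟨k, hk, hjk⟩ := inner_to_end j hadj
    exact ⟨.inr k, hk, hjk⟩
  · obtain ⟨k, hk, hik⟩ := inner_to_end i hadj
    exact ⟨.inr k, hik, hk⟩
  · rcases ends_or_common_nbr i j (by simpa using hne) hadj with ⟨hi, hj⟩ | ⟨k, hik, hjk⟩
    · exact ⟨.inl (Classical.arbitrary W), hi, hj⟩
    · exact ⟨.inr k, hik, hjk⟩

/-- `1 - 3 - 0 - 2` is a path in the complement; the ends `0, 3` go to the inner vertices. -/
def pathGraphFourIsoCompl : pathGraph 4 ≃g (pathGraph 4)ᶜ where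
  toEquiv := ⟨![1, 3, 0, 2], ![2, 0, 3, 1], by decide, by decide⟩
  map_rel_iff' {i j} := by revert i j; simp [pathGraph_adj]; decide

def joinPathEndsComplIso (K : SimpleGraph W) : joinPathEnds Kᶜ ≃g (joinPathEnds K)ᶜ where
  toEquiv := Equiv.sumCongr (Equiv.refl W) pathGraphFourIsoCompl.toEquiv
  map_rel_iff' {x y} := by
    rcases x with a | i <;> rcases y with b | j
    · simp
    · revert j; simp [pathGraphFourIsoCompl]; decide
    · revert i; simp [pathGraphFourIsoCompl]; decide
    · simpa using pathGraphFourIsoCompl.map_adj_iff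

lemma ediam_compl_joinPathEnds_le_two [Nonempty W] (K : SimpleGraph W) :
    (joinPathEnds K)ᶜ.ediam ≤ 2 :=
  (joinPathEndsComplIso K).ediam_eq ▸ ediam_joinPathEnds_le_two Kᶜ

end SimpleGraph

/-- Every finite graph is an induced subgraph of a self 2-distance graph. -/
theorem exists_selfTwoDist_inducedSupergraph {V : Type*} [Fintype V] (G : SimpleGraph V) :
    ∃ (n : ℕ) (H : SimpleGraph (Fin n)),
      Nonempty (twoDistGraph H ≃g H) ∧ Nonempty (G ↪g H) := by
  let K := G ⊕g (⊥ : SimpleGraph Unit)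
  let B := joinPathEnds K
  obtain ⟨selfIso⟩ := nonempty_twoDistGraph_sum_compl_iso (ediam_joinPathEnds_le_two K)
    (ediam_compl_joinPathEnds_le_two K)
  let toFin := (B ⊕g Bᶜ).overFinIso rfl
  refine ⟨_, (B ⊕g Bᶜ).overFin rfl, ⟨toFin.symm.twoDistGraph.trans (selfIso.trans toFin)⟩, ⟨?_⟩⟩
  exact Embedding.sumInl.trans ((Embedding.joinPathEndsInl K).trans
    (Embedding.sumInl.trans toFin.toEmbedding))
end

section
/- Let Γ be a finite connected self 2-distance graph with at least two vertices that is not isomorphic to the cycle graph Cₙ for any odd n ≥ 5. Then the girth of Γ equals 3. -/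
/-! If `G` is triangle-free, the neighbours of any vertex are pairwise at distance `2`, so they
form a clique in `G₂ ≅ G`; hence every vertex has at most two neighbours. A bipartite graph with an
edge has a disconnected 2-distance graph (distance-2 pairs share a colour), so `G` is not bipartite,
in particular not a tree. A connected graph of maximum degree `2` containing a cycle is that cycle;
an even cycle is bipartite and `C₃` is a triangle, leaving only the odd cycles `Cₙ`, `n ≥ 5`. -/

open SimpleGraph

open Function

namespace SimpleGraph

variable {V : Type*} {G : SimpleGraph V}

theorem IsClique.ncard_lt_of_cliqueFree {s : Set V} {n : ℕ} (hG : G.CliqueFree n)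
    (hs : G.IsClique s) : s.ncard < n := by
  by_contra! hn
  obtain ⟨t, hts, htn⟩ := Set.exists_subset_card_eq hn
  by_cases ht : t.Finite
  · refine hG ht.toFinset ⟨by simpa using hs.subset hts, ?_⟩
    rw [← htn, Set.ncard_eq_toFinset_card t ht]
  · rw [Set.Infinite.ncard ht] at htn
    exact not_cliqueFree_zero (htn ▸ hG)

theorem girth_eq_three_of_not_cliqueFree_three (h : ¬G.CliqueFree 3) : G.girth = 3 := by
  obtain ⟨u, w, hw, hlen⟩ :=
    is3Clique_iff_exists_cycle_length_three.mp (by simpa [CliqueFree] using h)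
  exact le_antisymm (hlen ▸ girth_le_length hw) (three_le_girth fun hG => hG w hw)

theorem isClique_twoDistGraph_neighborSet (hG : G.CliqueFree 3) (v : V) :
    (twoDistGraph G).IsClique (G.neighborSet v) := by
  classical
  intro x (hx : G.Adj v x) y (hy : G.Adj v y) hxy
  let p : G.Walk x y := (Walk.nil.cons hy).cons hx.symm
  have hle : G.dist x y ≤ 2 := dist_le p
  have hne0 : G.dist x y ≠ 0 := dist_ne_zero_iff_ne_and_reachable.mpr ⟨hxy, ⟨p⟩⟩
  have hne1 : G.dist x y ≠ 1 := fun h1 =>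
    is3Clique_triple_iff.mpr ⟨hx, hy, dist_eq_one_iff_adj.mp h1⟩ |>.not_cliqueFree hG
  show G.dist x y = 2
  omega

theorem ncard_neighborSet_le_two (hG : G.CliqueFree 3) (e : twoDistGraph G ≃g G) (v : V) :
    (G.neighborSet v).ncard ≤ 2 :=
  Nat.lt_succ_iff.mp <|
    (isClique_twoDistGraph_neighborSet hG v).ncard_lt_of_cliqueFree (hG.comap e.isContained)

theorem Coloring.eq_of_twoDistGraph_adj (c : G.Coloring Bool) {x y : V}
    (h : (twoDistGraph G).Adj x y) : c x = c y := by
  have h : G.dist x y = 2 := h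
  obtain ⟨p, hp⟩ := exists_walk_of_dist_ne_zero (h ▸ two_ne_zero)
  exact Bool.eq_iff_iff.mpr <| (c.even_length_iff_congr p).mp (by rw [hp, h]; exact even_two)

theorem Coloring.eq_of_twoDistGraph_reachable (c : G.Coloring Bool) {x y : V}
    (h : (twoDistGraph G).Reachable x y) : c x = c y := by
  obtain ⟨p⟩ := h
  by_contra hxy
  obtain ⟨d, -, hd, hd'⟩ := p.exists_boundary_dart {z | c z = c x} rfl fun h => hxy h.symm
  exact hd' ((c.eq_of_twoDistGraph_adj d.adj).symm.trans hd)

theorem not_preconnected_twoDistGraph (hG : G.IsBipartite) {x y : V} (hxy : G.Adj x y) :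
    ¬(twoDistGraph G).Preconnected := fun h =>
  let c := G.recolorOfEquiv finTwoEquiv hG.some
  c.valid hxy (c.eq_of_twoDistGraph_reachable (h x y))

section CycleGraph

variable [Finite V] {n : ℕ} {f : Fin (n + 3) → V}

theorem neighborSet_eq_pair_of_adj_add_one (hf : Injective f)
    (hadj : ∀ i, G.Adj (f i) (f (i + 1))) {i : Fin (n + 3)}
    (hdeg : (G.neighborSet (f i)).ncard ≤ 2) :
    G.neighborSet (f i) = {f (i - 1), f (i + 1)} := by
  have hsub : {f (i - 1), f (i + 1)} ⊆ G.neighborSet (f i) := by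
    rintro _ (rfl | rfl)
    · simpa using (hadj (i - 1)).symm
    · exact hadj i
  have hne : i - 1 ≠ i + 1 := by
    rw [Ne, sub_eq_iff_eq_add, add_assoc, left_eq_add]
    simp [Fin.ext_iff, Fin.val_add, Nat.mod_eq_of_lt (show 2 < n + 3 by omega)]
  refine (Set.eq_of_subset_of_ncard_le hsub ?_).symm
  rwa [Set.ncard_pair (hf.ne hne)]

variable (hdeg : ∀ v, (G.neighborSet v).ncard ≤ 2) (hf : Injective f)
  (hadj : ∀ i, G.Adj (f i) (f (i + 1)))
include hdeg hf hadj

theorem surjective_of_adj_add_one (hG : G.Preconnected) : Surjective f := by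
  intro v
  by_contra hv
  obtain ⟨p⟩ := hG (f 0) v
  obtain ⟨⟨⟨_, w⟩, hw⟩, -, ⟨i, rfl⟩, hwf⟩ := p.exists_boundary_dart (Set.range f) ⟨0, rfl⟩ hv
  have hw : w ∈ G.neighborSet (f i) := hw
  rw [neighborSet_eq_pair_of_adj_add_one hf hadj (hdeg _)] at hw
  rcases hw with rfl | rfl <;> exact hwf ⟨_, rfl⟩

theorem cycleGraph_adj_iff_adj_of_adj_add_one {i j : Fin (n + 3)} :
    (cycleGraph (n + 3)).Adj i j ↔ G.Adj (f i) (f j) := by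
  rw [← G.mem_neighborSet, neighborSet_eq_pair_of_adj_add_one hf hadj (hdeg _), cycleGraph_adj,
    Set.mem_insert_iff, Set.mem_singleton_iff, hf.eq_iff, hf.eq_iff, sub_eq_iff_eq_add,
    sub_eq_iff_eq_add, eq_sub_iff_add_eq, add_comm 1 j, eq_comm (a := j + 1), add_comm 1 i]

end CycleGraph

theorem exists_iso_cycleGraph_of_ncard_neighborSet_le_two [Finite V] (hG : G.Connected)
    (hdeg : ∀ v, (G.neighborSet v).ncard ≤ 2) (hcyc : ¬G.IsAcyclic) :
    ∃ n, 3 ≤ n ∧ Nonempty (G ≃g cycleGraph n) := by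
  obtain ⟨u, c, hc⟩ : ∃ u, ∃ c : G.Walk u u, c.IsCycle := by simpa [IsAcyclic] using hcyc
  obtain ⟨n, hn⟩ := Nat.exists_eq_add_of_le' hc.three_le_length
  let f : Fin (n + 3) → V := fun i => c.getVert i
  have hf : Injective f := fun i j h =>
    Fin.ext <| hc.getVert_injOn' (by simp; omega) (by simp; omega) h
  have hadj : ∀ i, G.Adj (f i) (f (i + 1)) := by
    intro i
    by_cases hi : i = Fin.last _
    · subst hi
      simpa [f, Fin.last_add_one, ← hn] using c.adj_getVert_succ (i := n + 2) (by omega)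
    · rw [show f (i + 1) = c.getVert (i + 1) from
        congrArg c.getVert (Fin.val_add_one_of_lt (Fin.lt_last_iff_ne_last.mpr hi))]
      exact c.adj_getVert_succ (by omega)
  let e : cycleGraph (n + 3) ≃g G :=
    ⟨.ofBijective f ⟨hf, surjective_of_adj_add_one hdeg hf hadj hG.preconnected⟩,
      (cycleGraph_adj_iff_adj_of_adj_add_one hdeg hf hadj).symm⟩
  exact ⟨n + 3, by omega, ⟨e.symm⟩⟩

theorem exists_iso_oddCycle_of_twoDistGraph_iso [Finite V] [Nontrivial V] (hG : G.Connected)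
    (e : twoDistGraph G ≃g G) (hfree : G.CliqueFree 3) :
    ∃ n, 5 ≤ n ∧ Odd n ∧ Nonempty (G ≃g cycleGraph n) := by
  have hbip : ¬G.IsBipartite := fun hbip =>
    have ⟨x, hx⟩ := hG.preconnected.exists_adj_of_nontrivial hG.nonempty.some
    not_preconnected_twoDistGraph hbip hx (e.preconnected_iff.mpr hG.preconnected)
  obtain ⟨n, hn, ⟨φ⟩⟩ := exists_iso_cycleGraph_of_ncard_neighborSet_le_two hG
    (ncard_neighborSet_le_two hfree e) fun hacyc => hbip hacyc.isBipartite
  have hodd : Odd n := by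
    by_contra heven
    have c := cycleGraph.bicoloring_of_even n (Nat.not_odd_iff_even.mp heven)
    exact hbip ⟨recolorOfEquiv _ finTwoEquiv.symm (c.comp φ.toHom)⟩
  have hn3 : n ≠ 3 := by
    rintro rfl
    rw [cycleGraph_three_eq_top] at φ
    exact (IsContained.refl _).not_cliqueFree (hfree.comap φ.symm.isContained)
  exact ⟨n, by obtain ⟨k, rfl⟩ := hodd; omega, hodd, ⟨φ⟩⟩

end SimpleGraph

/-- A connected self 2-distance graph (with at least two vertices) which is not
an odd cycle of length ≥ 5 has girth 3. -/
theorem girth_eq_three_of_selfTwoDist {V : Type*} [Fintype V] (G : SimpleGraph V)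
    (hconn : G.Connected) (hcard : 1 < Fintype.card V)
    (hself : Nonempty (twoDistGraph G ≃g G))
    (hcyc : ∀ n : ℕ, 5 ≤ n → Odd n → IsEmpty (G ≃g cycleGraph n)) :
    G.girth = 3 := by
  have : Nontrivial V := Fintype.one_lt_card_iff_nontrivial.mp hcard
  refine girth_eq_three_of_not_cliqueFree_three fun hfree => ?_
  obtain ⟨n, hn, hodd, ⟨φ⟩⟩ := exists_iso_oddCycle_of_twoDistGraph_iso hconn hself.some hfree
  exact (hcyc n hn hodd).false φ
end

section
/- Let Γ be a finite simple graph with no 4-cycle subgraph. Then the number of edges of the line graph L(Γ) equals the number of edges of the 2-distance graph Γ₂ plus three times the number of triangles of Γ, i.e. |E(L(Γ))| = |E(Γ₂)| + 3·∇(Γ). -/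
open SimpleGraph

/-!
Call a pair `(m, {u, w})` with `u ≠ w` both adjacent to `m` a cherry: it is the path `u – m – w`.
An edge of `L(Γ)` is a pair of edges `mu`, `mw` sharing exactly one vertex `m`, so the edges of
`L(Γ)` are exactly the cherries. Split them according to whether `uw` is an edge of `Γ`. If it
is, the cherry is a triangle `{m, u, w}` with the marked vertex `m`, and every triangle arises in
three ways. If it is not, `u` and `w` are at distance `2`; without `4`-cycles two distinct
vertices have at most one common neighbour, so such a cherry is determined by `{u, w}`, and
every edge of `Γ₂` arises in this way.
-/

lemma Set.ncard_setOf_pred_and_mem_eq_mul {α : Type*} [Finite α] {P : Finset α → Prop} {k : ℕ}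
    (hP : ∀ s, P s → s.card = k) :
    {x : α × Finset α | P x.2 ∧ x.1 ∈ x.2}.ncard = k * Nat.card {s // P s} := by
  have e : {x : α × Finset α | P x.2 ∧ x.1 ∈ x.2} ≃ Σ s : {s // P s}, (s : Finset α) :=
    { toFun x := ⟨⟨x.1.2, x.2.1⟩, ⟨x.1.1, x.2.2⟩⟩
      invFun y := ⟨(y.2.1, y.1.1), y.1.2, y.2.2⟩
      left_inv _ := rfl
      right_inv _ := rfl }
  have := Fintype.ofFinite {s // P s}
  rw [← Nat.card_coe_set_eq, Nat.card_congr e, Nat.card_sigma, Nat.card_eq_fintype_card,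
    ← Finset.card_univ]
  simp_rw [Nat.card_eq_finsetCard, fun s : {s // P s} => hP s s.2]
  rw [Finset.sum_const, smul_eq_mul, mul_comm]

namespace SimpleGraph

variable {V : Type*} {G : SimpleGraph V}

lemma commonNeighbors_subsingleton_of_not_hasNCycle_four (h4 : ¬ HasNCycle G 4) {u w : V}
    (huw : u ≠ w) : (G.commonNeighbors u w).Subsingleton := by
  intro m hm m' hm'
  rw [mem_commonNeighbors] at hm hm'
  by_contra hmm
  refine h4 ⟨![u, m, w, m'], ?_, ?_⟩
  · have := hm.1.ne; have := hm.2.ne; have := hm'.1.ne; have := hm'.2.ne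
    intro i j hij
    fin_cases i <;> fin_cases j <;> simp_all [eq_comm] <;> rfl
  · intro i
    fin_cases i
    exacts [hm.1, hm.2.symm, hm'.2, hm'.1.symm]

lemma twoDistGraph_adj_iff {u w : V} :
    (twoDistGraph G).Adj u w ↔ u ≠ w ∧ ¬ G.Adj u w ∧ (G.commonNeighbors u w).Nonempty := by
  change G.dist u w = 2 ↔ _
  rw [dist, ENat.toNat_eq_iff two_ne_zero]
  exact edist_eq_two_iff

variable (G) in
def cherrySet : Set (V × Sym2 V) :=
  {x | ¬ x.2.IsDiag ∧ ∀ y ∈ x.2, G.Adj x.1 y}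

lemma mk_mem_cherrySet_iff {m u w : V} :
    (m, s(u, w)) ∈ G.cherrySet ↔ u ≠ w ∧ G.Adj m u ∧ G.Adj m w := by
  simp [cherrySet]

def cherryEdges (x : V × Sym2 V) : Sym2 (Sym2 V) :=
  x.2.map (s(x.1, ·))

lemma injOn_cherryEdges : Set.InjOn cherryEdges G.cherrySet := by
  rintro ⟨m, p⟩ hx ⟨m', p'⟩ hx' h
  induction p with | h u w => ?_
  induction p' with | h u' w' => ?_
  obtain ⟨huw, hu, hw⟩ := mk_mem_cherrySet_iff.mp hx
  obtain ⟨huw', hu', hw'⟩ := mk_mem_cherrySet_iff.mp hx'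
  have := hu.ne; have := hw.ne; have := hu'.ne; have := hw'.ne
  simp only [cherryEdges, Sym2.map_mk, Sym2.eq_iff] at h
  simp only [Prod.mk.injEq, Sym2.eq_iff]
  grind

lemma ncard_cherrySet_eq_card_edgeSet_lineGraph :
    G.cherrySet.ncard = Nat.card G.lineGraph.edgeSet := by
  rw [Nat.card_coe_set_eq]
  have hmap (x : V × Sym2 V) (hx : x ∈ G.cherrySet) :
      (x.2.pmap (fun y hy => (⟨s(x.1, y), hy⟩ : G.edgeSet)) hx.2).map Subtype.val =
        cherryEdges x := by
    obtain ⟨m, ⟨u, w⟩⟩ := x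
    rfl
  refine Set.ncard_congr (fun x hx => x.2.pmap (fun y hy => (⟨s(x.1, y), hy⟩ : G.edgeSet)) hx.2)
    ?_ ?_ ?_
  · rintro ⟨m, p⟩ hx
    induction p with | h u w => ?_
    obtain ⟨huw, hu, hw⟩ := mk_mem_cherrySet_iff.mp hx
    refine lineGraph_adj_iff_exists.mpr ⟨?_, m, by simp, by simp⟩
    simp [huw, hu.ne']
  · intro x y hx hy h
    apply injOn_cherryEdges hx hy
    rw [← hmap x hx, ← hmap y hy, h]
  · intro q hq
    induction q with | h e f => ?_
    obtain ⟨hef, m, hme, hmf⟩ := lineGraph_adj_iff_exists.mp hq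
    obtain ⟨e, he⟩ := e
    obtain ⟨f, hf⟩ := f
    obtain ⟨u, rfl⟩ := Sym2.mem_iff_exists.mp hme
    obtain ⟨w, rfl⟩ := Sym2.mem_iff_exists.mp hmf
    refine ⟨(m, s(u, w)), mk_mem_cherrySet_iff.mpr ⟨?_, he, hf⟩, rfl⟩
    rintro rfl
    exact hef rfl

lemma injOn_snd_cherrySet (h4 : ¬ HasNCycle G 4) : Set.InjOn Prod.snd G.cherrySet := by
  rintro ⟨m, p⟩ hx ⟨m', p'⟩ hx' (rfl : p = p')
  induction p with | h u w => ?_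
  obtain ⟨huw, hu, hw⟩ := mk_mem_cherrySet_iff.mp hx
  obtain ⟨-, hu', hw'⟩ := mk_mem_cherrySet_iff.mp hx'
  rw [commonNeighbors_subsingleton_of_not_hasNCycle_four h4 huw ⟨hu.symm, hw.symm⟩
    ⟨hu'.symm, hw'.symm⟩]

lemma image_snd_cherrySet_sdiff_edgeSet :
    Prod.snd '' (G.cherrySet \ Prod.snd ⁻¹' G.edgeSet) = (twoDistGraph G).edgeSet := by
  ext p
  induction p with | h u w => ?_
  simp only [Set.mem_image, Set.mem_sdiff, Set.mem_preimage, Prod.exists, exists_eq_right,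
    mk_mem_cherrySet_iff, mem_edgeSet, twoDistGraph_adj_iff, Set.Nonempty, mem_commonNeighbors]
  constructor
  · rintro ⟨m, ⟨huw, hu, hw⟩, hne⟩
    exact ⟨huw, hne, m, hu.symm, hw.symm⟩
  · rintro ⟨huw, hne, m, hu, hw⟩
    exact ⟨m, ⟨huw, hu.symm, hw.symm⟩, hne⟩

lemma ncard_cherrySet_sdiff_edgeSet (h4 : ¬ HasNCycle G 4) :
    (G.cherrySet \ Prod.snd ⁻¹' G.edgeSet).ncard = (twoDistGraph G).edgeSet.ncard := by
  rw [← image_snd_cherrySet_sdiff_edgeSet,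
    ((injOn_snd_cherrySet h4).mono Set.sdiff_subset).ncard_image]

lemma ncard_cherrySet_inter_edgeSet :
    (G.cherrySet ∩ Prod.snd ⁻¹' G.edgeSet).ncard =
      {x : V × Finset V | G.IsNClique 3 x.2 ∧ x.1 ∈ x.2}.ncard := by
  classical
  refine Set.ncard_congr (fun x _ => (x.1, insert x.1 x.2.toFinset)) ?_ ?_ ?_
  · rintro ⟨m, p⟩ ⟨hx, hp⟩
    induction p with | h u w => ?_
    obtain ⟨-, hu, hw⟩ := mk_mem_cherrySet_iff.mp hx
    refine ⟨?_, Finset.mem_insert_self _ _⟩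
    rw [Sym2.toFinset_mk_eq, is3Clique_triple_iff]
    exact ⟨hu, hw, hp⟩
  · rintro ⟨m, p⟩ ⟨m', p'⟩ ⟨hx, -⟩ ⟨hx', -⟩ h
    obtain ⟨rfl, ht⟩ := Prod.ext_iff.mp h
    have hp : p.toFinset = p'.toFinset := by
      have hm : m ∉ p.toFinset := fun hm => (hx.2 m (Sym2.mem_toFinset.mp hm)).ne rfl
      have hm' : m ∉ p'.toFinset := fun hm => (hx'.2 m (Sym2.mem_toFinset.mp hm)).ne rfl
      simpa [Finset.erase_insert hm, Finset.erase_insert hm'] using congrArg (Finset.erase · m) ht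
    exact Prod.ext rfl (Sym2.ext fun x => by rw [← Sym2.mem_toFinset, hp, Sym2.mem_toFinset])
  · rintro ⟨m, t⟩ ⟨ht, hm⟩
    obtain ⟨u, w, huw, hut⟩ := Finset.card_eq_two.mp (by
      rw [Finset.card_erase_of_mem hm, ht.2] : (t.erase m).card = 2)
    have hu : u ∈ t.erase m := by simp [hut]
    have hw : w ∈ t.erase m := by simp [hut]
    refine ⟨(m, s(u, w)), ⟨mk_mem_cherrySet_iff.mpr ⟨huw, ?_, ?_⟩, ?_⟩, ?_⟩
    · exact ht.1 hm (Finset.mem_of_mem_erase hu) (Finset.ne_of_mem_erase hu).symm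
    · exact ht.1 hm (Finset.mem_of_mem_erase hw) (Finset.ne_of_mem_erase hw).symm
    · exact ht.1 (Finset.mem_of_mem_erase hu) (Finset.mem_of_mem_erase hw) huw
    · simp only [Sym2.toFinset_mk_eq, ← hut, Finset.insert_erase hm]

end SimpleGraph

/-- For a graph with no 4-cycle subgraph, the number of edges of the line graph
equals the number of edges of the 2-distance graph plus three times the number
of triangles. -/
theorem card_edges_lineGraph_of_c4Free {V : Type*} [Fintype V] (G : SimpleGraph V)
    (h4 : ¬ HasNCycle G 4) :
    Nat.card G.lineGraph.edgeSet =
      Nat.card (twoDistGraph G).edgeSet +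
        3 * Nat.card {s : Finset V // G.IsNClique 3 s} := by
  rw [← ncard_cherrySet_eq_card_edgeSet_lineGraph,
    ← Set.ncard_inter_add_ncard_sdiff_eq_ncard G.cherrySet (Prod.snd ⁻¹' G.edgeSet),
    ncard_cherrySet_sdiff_edgeSet h4, ncard_cherrySet_inter_edgeSet,
    Set.ncard_setOf_pred_and_mem_eq_mul fun _ hs => hs.2, Nat.card_coe_set_eq, add_comm]
end
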